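/- Fix a real number ν ≥ 1 and a positive natural number k. For a sequence a : ℕ → ℂ define the weighted norm ‖a‖_ν := |a(0)| + 2·Σ_{β ≥ 1} |a(β)|·ν^β, and for a, b : ℕ → ℂ define the Chebyshev convolution (a * b)(β) := Σ_{γ ∈ ℤ} a(|β − γ|)·b(|γ|), the sum ranging over all integers γ. For A, B : (Fin k → ℕ) → (ℕ → ℂ) with ‖A‖ := Σ_{α} ‖A(α)‖_ν < ∞ and ‖B‖ := Σ_{α} ‖B(α)‖_ν < ∞ (sums over all multi-indices α ∈ ℕ^k), define the Taylor–Chebyshev convolution (A ⊛ B)(α) := Σ_{β ≤ α} A(α − β) * B(β), the finite sum ranging over multi-indices β with β(i) ≤ α(i) for all i. Then Σ_{α} ‖(A ⊛ B)(α)‖_ν ≤ ‖A‖·‖B‖. -/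

import Mathlib

/-!
Everything is done in `ℝ≥0∞`, where all series converge and sums may be exchanged freely. Extended
evenly to `ℤ`, a Chebyshev sequence `a` has `‖a‖_ν = Σ_{γ ∈ ℤ} |a |γ|| ν^|γ|`, and `a * b` becomes
the ordinary convolution over `ℤ` of the even extensions; since `ν^|β| ≤ ν^|β - γ| ν^|γ|` for
`ν ≥ 1`, this weighted `ℓ¹(ℤ)` norm is submultiplicative. The Taylor part is a Cauchy product over
`ℕ^k`, for which the `ℓ¹` norm is multiplicative by Tonelli. The finiteness of the resulting bound
gives the summability claims, and then the real inequality.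
-/

open scoped ENNReal

/-- The weighted `ℓ¹_ν` norm of a Chebyshev coefficient sequence:
`‖a‖_ν = |a 0| + 2 Σ_{β ≥ 1} |a β| ν^β`. -/
noncomputable def chebNorm (ν : ℝ) (a : ℕ → ℂ) : ℝ :=
  ‖a 0‖ + 2 * ∑' β : ℕ, ‖a (β + 1)‖ * ν ^ (β + 1)

/-- The discrete Chebyshev convolution
`(a * b)(β) = Σ_{γ ∈ ℤ} a(|β − γ|) b(|γ|)`. -/
noncomputable def chebConv (a b : ℕ → ℂ) : ℕ → ℂ :=
  fun β => ∑' γ : ℤ, a ((β - γ : ℤ).natAbs) * b γ.natAbs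

/-- The Taylor–Chebyshev convolution: Cauchy product over multi-indices
combined with the Chebyshev convolution of the coefficient sequences. -/
noncomputable def taylorChebConv {k : ℕ} (A B : (Fin k → ℕ) → ℕ → ℂ) :
    (Fin k → ℕ) → ℕ → ℂ :=
  fun α => ∑ β ∈ Finset.Iic α, chebConv (A (α - β)) (B β)

namespace ENNReal

theorem tsum_comp_natAbs (g : ℕ → ℝ≥0∞) :
    ∑' γ : ℤ, g γ.natAbs = g 0 + 2 * ∑' n : ℕ, g (n + 1) := by
  rw [tsum_of_nat_of_neg_add_one ENNReal.summable ENNReal.summable,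
    tsum_eq_zero_add' ENNReal.summable, two_mul, add_assoc]
  simp only [Int.natAbs_natCast, Int.natAbs_neg, ← Nat.cast_add_one]

theorem tsum_mul_tsum_eq_tsum_tsum_sub {G : Type*} [AddGroup G] (u v : G → ℝ≥0∞) :
    (∑' x, u x) * ∑' y, v y = ∑' x, ∑' y, u (x - y) * v y := by
  rw [ENNReal.tsum_comm, ← ENNReal.tsum_mul_left]
  refine tsum_congr fun y => ?_
  rw [← ENNReal.tsum_mul_right, ← (Equiv.subRight y).tsum_eq]
  simp

theorem tsum_mul_tsum_eq_tsum_sum_Iic {M : Type*} [AddCommMonoid M] [PartialOrder M]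
    [IsOrderedCancelAddMonoid M] [CanonicallyOrderedAdd M] [Sub M] [OrderedSub M]
    [LocallyFiniteOrderBot M]
    (U V : M → ℝ≥0∞) :
    (∑' x, U x) * ∑' y, V y = ∑' x, ∑ y ∈ Finset.Iic x, U (x - y) * V y := by
  classical
  have h : ∀ x, ∑ y ∈ Finset.Iic x, U (x - y) * V y
      = ∑' y, if y ≤ x then U (x - y) * V y else 0 := fun x => by
    rw [tsum_eq_sum (s := Finset.Iic x) fun y hy => if_neg (by simpa using hy),
      Finset.sum_congr rfl fun y hy => if_pos (Finset.mem_Iic.1 hy)]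
  simp_rw [h]
  rw [ENNReal.tsum_comm, ← ENNReal.tsum_mul_left]
  refine tsum_congr fun y => ?_
  have hsupp : (Function.support fun x => if y ≤ x then U (x - y) * V y else 0)
      ⊆ Set.range (· + y) := fun x hx => by
    by_cases hyx : y ≤ x
    · exact ⟨x - y, tsub_add_cancel_of_le hyx⟩
    · simp [hyx] at hx
  rw [← (add_left_injective y).tsum_eq hsupp, ← ENNReal.tsum_mul_right]
  simp

end ENNReal

section ChebNorm

variable {ν : ℝ}

noncomputable def chebENorm (ν : ℝ) (a : ℕ → ℂ) : ℝ≥0∞ :=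
  ∑' γ : ℤ, ‖a γ.natAbs‖ₑ * ENNReal.ofReal ν ^ γ.natAbs

theorem chebNorm_nonneg (hν : 0 ≤ ν) (a : ℕ → ℂ) : 0 ≤ chebNorm ν a := by
  have : 0 ≤ ∑' n : ℕ, ‖a (n + 1)‖ * ν ^ (n + 1) := tsum_nonneg fun n => by positivity
  unfold chebNorm
  positivity

theorem ofReal_norm_mul_pow {E : Type*} [SeminormedAddGroup E] (hν : 0 ≤ ν) (z : E) (n : ℕ) :
    ENNReal.ofReal (‖z‖ * ν ^ n) = ‖z‖ₑ * ENNReal.ofReal ν ^ n := by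
  rw [ENNReal.ofReal_mul (norm_nonneg z), ofReal_norm, ENNReal.ofReal_pow hν]

theorem chebENorm_eq_ofReal_chebNorm (hν : 0 ≤ ν) {a : ℕ → ℂ}
    (ha : Summable fun n => ‖a n‖ * ν ^ n) : chebENorm ν a = ENNReal.ofReal (chebNorm ν a) := by
  have hnonneg : ∀ n, 0 ≤ ‖a (n + 1)‖ * ν ^ (n + 1) := fun n => by positivity
  rw [chebENorm, ENNReal.tsum_comp_natAbs (fun n => ‖a n‖ₑ * ENNReal.ofReal ν ^ n), chebNorm,
    ENNReal.ofReal_add (norm_nonneg _) (mul_nonneg zero_le_two (tsum_nonneg hnonneg)),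
    ENNReal.ofReal_mul zero_le_two,
    ENNReal.ofReal_tsum_of_nonneg hnonneg (ha.comp_injective (add_left_injective 1))]
  simp [ofReal_norm_mul_pow hν]

theorem summable_of_chebENorm_ne_top (hν : 0 ≤ ν) {a : ℕ → ℂ} (ha : chebENorm ν a ≠ ⊤) :
    Summable fun n => ‖a n‖ * ν ^ n := by
  have hle : ∑' n : ℕ, ENNReal.ofReal (‖a n‖ * ν ^ n) ≤ chebENorm ν a := by
    rw [chebENorm]
    simpa only [ofReal_norm_mul_pow hν, Int.natAbs_natCast] using
      ENNReal.tsum_comp_le_tsum_of_injective Nat.cast_injective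
        fun γ : ℤ => ‖a γ.natAbs‖ₑ * ENNReal.ofReal ν ^ γ.natAbs
  refine (ENNReal.summable_toReal (ne_top_of_le_ne_top ha hle)).congr fun n => ?_
  exact ENNReal.toReal_ofReal (by positivity)

theorem ofReal_tsum_chebNorm {ι : Type*} (hν : 0 ≤ ν) {F : ι → ℕ → ℂ}
    (hF : ∀ i, Summable fun n => ‖F i n‖ * ν ^ n) (h : Summable fun i => chebNorm ν (F i)) :
    ENNReal.ofReal (∑' i, chebNorm ν (F i)) = ∑' i, chebENorm ν (F i) := by
  rw [ENNReal.ofReal_tsum_of_nonneg (fun i => chebNorm_nonneg hν _) h]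
  exact tsum_congr fun i => (chebENorm_eq_ofReal_chebNorm hν (hF i)).symm

theorem summable_chebNorm_of_tsum_chebENorm_ne_top {ι : Type*} (hν : 0 ≤ ν) {F : ι → ℕ → ℂ}
    (h : ∑' i, chebENorm ν (F i) ≠ ⊤) :
    (∀ i, Summable fun n => ‖F i n‖ * ν ^ n) ∧ Summable fun i => chebNorm ν (F i) := by
  have hF i := summable_of_chebENorm_ne_top hν (ENNReal.ne_top_of_tsum_ne_top h i)
  refine ⟨hF, (ENNReal.summable_toReal h).congr fun i => ?_⟩
  rw [chebENorm_eq_ofReal_chebNorm hν (hF i), ENNReal.toReal_ofReal (chebNorm_nonneg hν _)]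

theorem chebENorm_sum_le {ι : Type*} (s : Finset ι) (f : ι → ℕ → ℂ) :
    chebENorm ν (∑ i ∈ s, f i) ≤ ∑ i ∈ s, chebENorm ν (f i) := by
  unfold chebENorm
  rw [← Summable.tsum_finsetSum fun _ _ => ENNReal.summable]
  refine ENNReal.tsum_le_tsum fun γ => ?_
  rw [Finset.sum_apply, ← Finset.sum_mul]
  gcongr
  exact enorm_sum_le _ _

theorem chebConv_natAbs (a b : ℕ → ℂ) (β : ℤ) :
    chebConv a b β.natAbs = ∑' γ : ℤ, a (β - γ).natAbs * b γ.natAbs := by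
  rcases Int.natAbs_eq β with hβ | hβ
  · rw [chebConv, ← hβ]
  · rw [chebConv, ← (Equiv.neg ℤ).tsum_eq]
    refine tsum_congr fun γ => ?_
    simp only [Equiv.neg_apply, Int.natAbs_neg]
    congr 2
    omega

theorem enorm_chebConv_mul_pow_le (hν : 1 ≤ ν) (a b : ℕ → ℂ) (β : ℤ) :
    ‖chebConv a b β.natAbs‖ₑ * ENNReal.ofReal ν ^ β.natAbs ≤
      ∑' γ : ℤ, (‖a (β - γ).natAbs‖ₑ * ENNReal.ofReal ν ^ (β - γ).natAbs) *
        (‖b γ.natAbs‖ₑ * ENNReal.ofReal ν ^ γ.natAbs) := by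
  set w := ENNReal.ofReal ν
  have hw : 1 ≤ w := ENNReal.one_le_ofReal.2 hν
  calc ‖chebConv a b β.natAbs‖ₑ * w ^ β.natAbs
      ≤ (∑' γ : ℤ, ‖a (β - γ).natAbs‖ₑ * ‖b γ.natAbs‖ₑ) * w ^ β.natAbs := by
        rw [chebConv_natAbs]
        gcongr
        simpa only [enorm_mul] using
          enorm_tsum_le_tsum_enorm (f := fun γ : ℤ => a (β - γ).natAbs * b γ.natAbs)
    _ = ∑' γ : ℤ, ‖a (β - γ).natAbs‖ₑ * ‖b γ.natAbs‖ₑ * w ^ β.natAbs := ENNReal.tsum_mul_right.symm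
    _ ≤ _ := ENNReal.tsum_le_tsum fun γ => by
        have hpow : w ^ β.natAbs ≤ w ^ (β - γ).natAbs * w ^ γ.natAbs := by
          rw [← pow_add]
          exact pow_le_pow_right₀ hw (by omega)
        calc ‖a (β - γ).natAbs‖ₑ * ‖b γ.natAbs‖ₑ * w ^ β.natAbs
            ≤ ‖a (β - γ).natAbs‖ₑ * ‖b γ.natAbs‖ₑ * (w ^ (β - γ).natAbs * w ^ γ.natAbs) := by
              gcongr
          _ = _ := by ring

theorem chebENorm_chebConv_le (hν : 1 ≤ ν) (a b : ℕ → ℂ) :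
    chebENorm ν (chebConv a b) ≤ chebENorm ν a * chebENorm ν b := by
  rw [chebENorm, chebENorm, chebENorm, ENNReal.tsum_mul_tsum_eq_tsum_tsum_sub]
  exact ENNReal.tsum_le_tsum (enorm_chebConv_mul_pow_le hν a b)

theorem tsum_chebENorm_taylorChebConv_le (hν : 1 ≤ ν) {k : ℕ} (A B : (Fin k → ℕ) → ℕ → ℂ) :
    ∑' α, chebENorm ν (taylorChebConv A B α) ≤
      (∑' α, chebENorm ν (A α)) * ∑' α, chebENorm ν (B α) := by
  rw [ENNReal.tsum_mul_tsum_eq_tsum_sum_Iic]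
  refine ENNReal.tsum_le_tsum fun α => (chebENorm_sum_le _ _).trans ?_
  exact Finset.sum_le_sum fun β _ => chebENorm_chebConv_le hν _ _

end ChebNorm

theorem taylorChebConv_norm_le_general
    (ν : ℝ) (hν : 1 ≤ ν) (k : ℕ)
    (A B : (Fin k → ℕ) → ℕ → ℂ)
    (hAν : ∀ α : Fin k → ℕ, Summable fun β : ℕ => ‖A α β‖ * ν ^ β)
    (hBν : ∀ α : Fin k → ℕ, Summable fun β : ℕ => ‖B α β‖ * ν ^ β)
    (hA : Summable fun α : Fin k → ℕ => chebNorm ν (A α))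
    (hB : Summable fun α : Fin k → ℕ => chebNorm ν (B α)) :
    (∀ α : Fin k → ℕ, Summable fun β : ℕ => ‖taylorChebConv A B α β‖ * ν ^ β) ∧
    (Summable fun α : Fin k → ℕ => chebNorm ν (taylorChebConv A B α)) ∧
    (∑' α : Fin k → ℕ, chebNorm ν (taylorChebConv A B α))
      ≤ (∑' α : Fin k → ℕ, chebNorm ν (A α)) * ∑' α : Fin k → ℕ, chebNorm ν (B α) := by
  have hν₀ : 0 ≤ ν := zero_le_one.trans hν
  have hnonneg (F : (Fin k → ℕ) → ℕ → ℂ) : 0 ≤ ∑' α, chebNorm ν (F α) :=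
    tsum_nonneg fun α => chebNorm_nonneg hν₀ (F α)
  have key := tsum_chebENorm_taylorChebConv_le hν A B
  rw [← ofReal_tsum_chebNorm hν₀ hAν hA, ← ofReal_tsum_chebNorm hν₀ hBν hB,
    ← ENNReal.ofReal_mul (hnonneg A)] at key
  obtain ⟨hCν, hC⟩ :=
    summable_chebNorm_of_tsum_chebENorm_ne_top hν₀ (ne_top_of_le_ne_top ENNReal.ofReal_ne_top key)
  refine ⟨hCν, hC, ?_⟩
  rw [← ofReal_tsum_chebNorm hν₀ hCν hC] at key
  exact (ENNReal.ofReal_le_ofReal_iff (mul_nonneg (hnonneg A) (hnonneg B))).1 key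

/-- Banach algebra property of `ℓ¹(ℓ¹_ν)` under the
Taylor–Chebyshev convolution `⊛`:
`Σ_α ‖(A ⊛ B)(α)‖_ν ≤ (Σ_α ‖A(α)‖_ν) (Σ_α ‖B(α)‖_ν)`. -/
theorem taylorChebConv_norm_le
    (ν : ℝ) (hν : 1 ≤ ν) (k : ℕ) (hk : 0 < k)
    (A B : (Fin k → ℕ) → ℕ → ℂ)
    (hAν : ∀ α : Fin k → ℕ, Summable fun β : ℕ => ‖A α β‖ * ν ^ β)
    (hBν : ∀ α : Fin k → ℕ, Summable fun β : ℕ => ‖B α β‖ * ν ^ β)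
    (hA : Summable fun α : Fin k → ℕ => chebNorm ν (A α))
    (hB : Summable fun α : Fin k → ℕ => chebNorm ν (B α)) :
    (∀ α : Fin k → ℕ, Summable fun β : ℕ => ‖taylorChebConv A B α β‖ * ν ^ β) ∧
    (Summable fun α : Fin k → ℕ => chebNorm ν (taylorChebConv A B α)) ∧
    (∑' α : Fin k → ℕ, chebNorm ν (taylorChebConv A B α))
      ≤ (∑' α : Fin k → ℕ, chebNorm ν (A α)) * ∑' α : Fin k → ℕ, chebNorm ν (B α) :=
  taylorChebConv_norm_le_general ν hν k A B hAν hBν hA hB
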